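/- Let U ⊆ ℝ² be open, ε > 0, and let v ∈ C^∞(U) satisfy Δ∞v + ε Δv = 0 at every point of U. Let β > −1 and δ > 0, and define G_δ : U → ℝ² by G_δ(x) = (|Dv(x)|² + δ)^{β/2} Dv(x). Then at every point of U: −det DG_δ ≥ (1/(β+1)) |D((|Dv|² + δ)^{(β+1)/2})|² + ((β+1)/ε) (|Dv|² + δ)^{β−1} (Δ∞v)². -/

import Mathlib

open Real MeasureTheory
open scoped RealInnerProductSpace

noncomputable section

/-- The Euclidean plane ℝ². -/
abbrev E2 : Type := EuclideanSpace ℝ (Fin 2)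

/-- Standard basis vector. -/
def ee (i : Fin 2) : E2 := EuclideanSpace.single i (1 : ℝ)

/-- Partial derivative ∂ᵢf. -/
def pd (i : Fin 2) (f : E2 → ℝ) (x : E2) : ℝ := fderiv ℝ f x (ee i)

/-- Second partial derivative ∂ᵢ∂ⱼf. -/
def pd2 (i j : Fin 2) (f : E2 → ℝ) (x : E2) : ℝ := pd i (pd j f) x

/-- |Df|², squared Euclidean norm of the gradient. -/
def gradSq (f : E2 → ℝ) (x : E2) : ℝ := (pd 0 f x) ^ 2 + (pd 1 f x) ^ 2

/-- |Df|, Euclidean norm of the gradient. -/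
def gradNorm (f : E2 → ℝ) (x : E2) : ℝ := Real.sqrt (gradSq f x)

/-- Laplacian Δf = tr D²f. -/
def lap (f : E2 → ℝ) (x : E2) : ℝ := pd2 0 0 f x + pd2 1 1 f x

/-- ∞-Laplacian Δ∞f = D²f Df · Df. -/
def infLap (f : E2 → ℝ) (x : E2) : ℝ :=
  pd2 0 0 f x * pd 0 f x * pd 0 f x + pd2 0 1 f x * pd 0 f x * pd 1 f x +
  pd2 1 0 f x * pd 1 f x * pd 0 f x + pd2 1 1 f x * pd 1 f x * pd 1 f x

/-- |D²f|², squared Frobenius norm of the Hessian. -/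
def hessFrobSq (f : E2 → ℝ) (x : E2) : ℝ :=
  (pd2 0 0 f x) ^ 2 + (pd2 0 1 f x) ^ 2 + (pd2 1 0 f x) ^ 2 + (pd2 1 1 f x) ^ 2

/-- det D²f, determinant of the Hessian. -/
def detHess (f : E2 → ℝ) (x : E2) : ℝ :=
  pd2 0 0 f x * pd2 1 1 f x - pd2 0 1 f x * pd2 1 0 f x

/-- |D²f Df|². -/
def hessGradSq (f : E2 → ℝ) (x : E2) : ℝ :=
  (pd2 0 0 f x * pd 0 f x + pd2 0 1 f x * pd 1 f x) ^ 2 +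
  (pd2 1 0 f x * pd 0 f x + pd2 1 1 f x * pd 1 f x) ^ 2

/-- Jacobian determinant of the planar map with components `F 0`, `F 1`. -/
def jdet (F : Fin 2 → E2 → ℝ) (x : E2) : ℝ :=
  pd 0 (F 0) x * pd 1 (F 1) x - pd 1 (F 0) x * pd 0 (F 1) x

/-- Squared Frobenius norm of the Jacobian of the planar map with components `F 0`, `F 1`. -/
def jFrobSq (F : Fin 2 → E2 → ℝ) (x : E2) : ℝ :=
  (pd 0 (F 0) x) ^ 2 + (pd 1 (F 0) x) ^ 2 + (pd 0 (F 1) x) ^ 2 + (pd 1 (F 1) x) ^ 2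

/-- Df · Dg. -/
def gradDot (f g : E2 → ℝ) (x : E2) : ℝ :=
  pd 0 f x * pd 0 g x + pd 1 f x * pd 1 g x

/-- D²ψ Dv · Dv. -/
def hessQuad (ψ v : E2 → ℝ) (x : E2) : ℝ :=
  pd2 0 0 ψ x * pd 0 v x * pd 0 v x + pd2 0 1 ψ x * pd 0 v x * pd 1 v x +
  pd2 1 0 ψ x * pd 1 v x * pd 0 v x + pd2 1 1 ψ x * pd 1 v x * pd 1 v x

/-- (D²v Dv) · Dψ. -/
def hessGradDot (v ψ : E2 → ℝ) (x : E2) : ℝ :=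
  (pd2 0 0 v x * pd 0 v x + pd2 0 1 v x * pd 1 v x) * pd 0 ψ x +
  (pd2 1 0 v x * pd 0 v x + pd2 1 1 v x * pd 1 v x) * pd 1 ψ x

/-- Smooth compactly supported test function on Ω. -/
def IsTestOn (ψ : E2 → ℝ) (Ω : Set E2) : Prop :=
  ContDiff ℝ (⊤ : ℕ∞) ψ ∧ HasCompactSupport ψ ∧ tsupport ψ ⊆ Ω

/-- Components of W = |Dv|⁻¹ Dv. -/
def Wcomp (v : E2 → ℝ) (i : Fin 2) : E2 → ℝ := fun y => (gradNorm v y)⁻¹ * pd i v y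

/-!
At a point write `p = Dv`, `H = D²v`, `w = Hp` and `q = |p|² + δ`. Then
`DG_δ = q^{β/2-1} (q H + β p ⊗ w)`, whose determinant is `q^{β-1} det H (q + β |p|²)`, while
`D(q^{(β+1)/2}) = (β+1) q^{(β-1)/2} w`. Cayley–Hamilton for the symmetric `2×2` matrix `H` gives
`|w|² = Δv Δ∞v - det H |p|²`, and the equation `Δv = -Δ∞v/ε` turns the claim into `δ det H ≤ 0`.
Finally `det H ≤ 0`: for a definite `H` both `Δ∞v = Hp·p` and `Δv ≠ 0` would have the sign of
`H`, which the equation forbids.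
-/

section PartialDerivatives

variable {f g : E2 → ℝ} {x : E2}

theorem pd_mul (hf : DifferentiableAt ℝ f x) (hg : DifferentiableAt ℝ g x) (i : Fin 2) :
    pd i (fun y => f y * g y) x = f x * pd i g x + g x * pd i f x := by
  simp [pd, fderiv_fun_mul hf hg]

theorem pd_add (hf : DifferentiableAt ℝ f x) (hg : DifferentiableAt ℝ g x) (i : Fin 2) :
    pd i (fun y => f y + g y) x = pd i f x + pd i g x := by
  simp [pd, fderiv_fun_add hf hg]

theorem pd_add_const (c : ℝ) (i : Fin 2) : pd i (fun y => f y + c) x = pd i f x := by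
  simp [pd, fderiv_add_const]

theorem pd_rpow_const (hf : DifferentiableAt ℝ f x) (hfx : f x ≠ 0) (r : ℝ) (i : Fin 2) :
    pd i (fun y => f y ^ r) x = r * f x ^ (r - 1) * pd i f x := by
  simp [pd, (hf.hasFDerivAt.rpow_const (p := r) (Or.inl hfx)).fderiv, mul_assoc]

end PartialDerivatives

section Gradient

variable {v : E2 → ℝ} {x : E2}

theorem gradSq_nonneg (v : E2 → ℝ) (x : E2) : 0 ≤ gradSq v x := by
  unfold gradSq; positivity

theorem ContDiffAt.differentiableAt_pd (hv : ContDiffAt ℝ 2 v x) (i : Fin 2) :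
    DifferentiableAt ℝ (pd i v) x :=
  ((hv.fderiv_right (m := 1) (by norm_num)).differentiableAt (by norm_num)).clm_apply
    (differentiableAt_const _)

theorem ContDiffAt.pd2_comm (hv : ContDiffAt ℝ 2 v x) (i j : Fin 2) :
    pd2 i j v x = pd2 j i v x := by
  have hD : DifferentiableAt ℝ (fderiv ℝ v) x :=
    (hv.fderiv_right (m := 1) (by norm_num)).differentiableAt (by norm_num)
  have hpd2 : ∀ k l : Fin 2, pd2 k l v x = fderiv ℝ (fderiv ℝ v) x (ee k) (ee l) := fun k l => by
    change fderiv ℝ (fun y => fderiv ℝ v y (ee l)) x (ee k) = _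
    simp [fderiv_clm_apply hD (differentiableAt_const _)]
  rw [hpd2, hpd2, hv.isSymmSndFDerivAt (by simp)]

variable (hv : ∀ i, DifferentiableAt ℝ (pd i v) x)
include hv

theorem differentiableAt_gradSq : DifferentiableAt ℝ (gradSq v) x :=
  ((hv 0).pow 2).add ((hv 1).pow 2)

theorem pd_gradSq (j : Fin 2) :
    pd j (gradSq v) x = 2 * (pd2 j 0 v x * pd 0 v x + pd2 j 1 v x * pd 1 v x) := by
  have h : gradSq v = fun y => pd 0 v y * pd 0 v y + pd 1 v y * pd 1 v y := by
    funext y; simp only [gradSq, sq]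
  rw [h, pd_add ((hv 0).fun_mul (hv 0)) ((hv 1).fun_mul (hv 1)), pd_mul (hv 0) (hv 0),
    pd_mul (hv 1) (hv 1)]
  simp only [pd2]
  ring

theorem pd_rpow_gradSq_add (hδ : 0 < δ) (r : ℝ) (j : Fin 2) :
    pd j (fun y => (gradSq v y + δ) ^ r) x =
      2 * r * (gradSq v x + δ) ^ (r - 1) * (pd2 j 0 v x * pd 0 v x + pd2 j 1 v x * pd 1 v x) := by
  have hq : 0 < gradSq v x + δ := add_pos_of_nonneg_of_pos (gradSq_nonneg v x) hδ
  have hdiff : DifferentiableAt ℝ (fun y => gradSq v y + δ) x :=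
    (differentiableAt_gradSq hv).add_const δ
  rw [pd_rpow_const hdiff hq.ne', pd_add_const, pd_gradSq hv]
  ring

theorem jdet_rpow_gradSq_add_mul_pd (hδ : 0 < δ) (β : ℝ) :
    jdet (fun i y => (gradSq v y + δ) ^ (β / 2) * pd i v y) x =
      (gradSq v x + δ) ^ (β - 1) * detHess v x * (gradSq v x + δ + β * gradSq v x) := by
  have hq : 0 < gradSq v x + δ := add_pos_of_nonneg_of_pos (gradSq_nonneg v x) hδ
  have hdiff : DifferentiableAt ℝ (fun y => (gradSq v y + δ) ^ (β / 2)) x :=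
    ((differentiableAt_gradSq hv).add_const δ).rpow_const (Or.inl hq.ne')
  have hG : ∀ i j : Fin 2, pd j (fun y => (gradSq v y + δ) ^ (β / 2) * pd i v y) x =
      (gradSq v x + δ) ^ (β / 2) * pd2 j i v x + pd i v x * (2 * (β / 2) *
        (gradSq v x + δ) ^ (β / 2 - 1) * (pd2 j 0 v x * pd 0 v x + pd2 j 1 v x * pd 1 v x)) :=
    fun i j => by rw [pd_mul hdiff (hv i), pd_rpow_gradSq_add hv hδ]; rfl
  have hpow : (gradSq v x + δ) ^ (β / 2) = (gradSq v x + δ) ^ (β / 2 - 1) * (gradSq v x + δ) := by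
    rw [← rpow_add_one hq.ne']; ring_nf
  have hpow' : (gradSq v x + δ) ^ (β - 1) =
      ((gradSq v x + δ) ^ (β / 2 - 1)) ^ 2 * (gradSq v x + δ) := by
    rw [← rpow_natCast, ← rpow_mul hq.le, ← rpow_add_one hq.ne']; ring_nf
  rw [jdet, hG, hG, hG, hG, hpow, hpow', detHess]
  simp only [gradSq]
  ring

theorem one_div_mul_sq_pd_rpow_gradSq_add (hδ : 0 < δ) (β : ℝ) :
    1 / (β + 1) * (pd 0 (fun y => (gradSq v y + δ) ^ ((β + 1) / 2)) x ^ 2 +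
        pd 1 (fun y => (gradSq v y + δ) ^ ((β + 1) / 2)) x ^ 2) =
      (gradSq v x + δ) ^ (β - 1) * ((β + 1) * hessGradSq v x) := by
  have hq : 0 < gradSq v x + δ := add_pos_of_nonneg_of_pos (gradSq_nonneg v x) hδ
  have hpow : ((gradSq v x + δ) ^ ((β + 1) / 2 - 1)) ^ 2 = (gradSq v x + δ) ^ (β - 1) := by
    rw [← rpow_natCast, ← rpow_mul hq.le]; ring_nf
  rw [pd_rpow_gradSq_add hv hδ, pd_rpow_gradSq_add hv hδ, hessGradSq, ← hpow]
  calc _ = 1 / (β + 1) * (β + 1) * (β + 1) * ((gradSq v x + δ) ^ ((β + 1) / 2 - 1)) ^ 2 *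
        ((pd2 0 0 v x * pd 0 v x + pd2 0 1 v x * pd 1 v x) ^ 2 +
          (pd2 1 0 v x * pd 0 v x + pd2 1 1 v x * pd 1 v x) ^ 2) := by ring
    _ = _ := by rw [one_div, inv_mul_mul_self]; ring

end Gradient

section Hessian

variable {v : E2 → ℝ} {x : E2} (hsym : pd2 0 1 v x = pd2 1 0 v x)
include hsym

theorem hessGradSq_eq_lap_mul_infLap_sub :
    hessGradSq v x = lap v x * infLap v x - detHess v x * gradSq v x := by
  simp only [hessGradSq, lap, infLap, detHess, gradSq, hsym]
  ring

theorem detHess_nonpos_of_infLap_add_mul_lap_eq_zero {ε : ℝ} (hε : 0 < ε)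
    (heq : infLap v x + ε * lap v x = 0) : detHess v x ≤ 0 := by
  by_contra! hdet
  have h00 : pd2 0 0 v x * infLap v x =
      (pd2 0 0 v x * pd 0 v x + pd2 0 1 v x * pd 1 v x) ^ 2 + detHess v x * pd 1 v x ^ 2 := by
    simp only [infLap, detHess, hsym]; ring
  have h11 : pd2 1 1 v x * infLap v x =
      (pd2 1 0 v x * pd 0 v x + pd2 1 1 v x * pd 1 v x) ^ 2 + detHess v x * pd 0 v x ^ 2 := by
    simp only [infLap, detHess, hsym]; ring
  have hlap_infLap : 0 ≤ lap v x * infLap v x := by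
    rw [lap, add_mul, h00, h11]; positivity
  have hlap : lap v x = 0 := by
    have h : ε * lap v x ^ 2 ≤ 0 := by
      rw [show infLap v x = -(ε * lap v x) by linarith] at hlap_infLap; linarith
    exact pow_eq_zero_iff two_ne_zero |>.1 <|
      le_antisymm (nonpos_of_mul_nonpos_right h hε) (sq_nonneg _)
  have : detHess v x = -(pd2 0 0 v x ^ 2 + pd2 0 1 v x ^ 2) := by
    rw [lap] at hlap
    rw [detHess, ← hsym, show pd2 1 1 v x = -pd2 0 0 v x by linarith]; ring
  linarith [sq_nonneg (pd2 0 0 v x), sq_nonneg (pd2 0 1 v x)]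

theorem hessGradSq_add_infLap_sq_le {ε δ : ℝ} (hε : 0 < ε) (hδ : 0 ≤ δ)
    (heq : infLap v x + ε * lap v x = 0) (β : ℝ) :
    (β + 1) * hessGradSq v x + (β + 1) / ε * infLap v x ^ 2 ≤
      -detHess v x * ((β + 1) * gradSq v x + δ) := by
  have hlap : lap v x = -infLap v x / ε := by field_simp; linarith
  have hLHS : (β + 1) * hessGradSq v x + (β + 1) / ε * infLap v x ^ 2 =
      -detHess v x * ((β + 1) * gradSq v x) := by
    rw [hessGradSq_eq_lap_mul_infLap_sub hsym, hlap]; field_simp; ring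
  have hdet := detHess_nonpos_of_infLap_add_mul_lap_eq_zero hsym hε heq
  rw [hLHS]
  linarith [mul_nonneg hδ (neg_nonneg.2 hdet)]

end Hessian

theorem stmt_14_general (U : Set E2) (hU : IsOpen U) (ε : ℝ) (hε : 0 < ε)
    (v : E2 → ℝ) (hv : ContDiffOn ℝ (⊤ : ℕ∞) v U)
    (heq : ∀ x ∈ U, infLap v x + ε * lap v x = 0)
    (β : ℝ) (δ : ℝ) (hδ : 0 < δ) :
    ∀ x ∈ U,
      (1/(β+1)) * ((pd 0 (fun y => (gradSq v y + δ) ^ ((β+1)/2)) x) ^ 2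
            + (pd 1 (fun y => (gradSq v y + δ) ^ ((β+1)/2)) x) ^ 2)
        + ((β+1)/ε) * (gradSq v x + δ) ^ (β-1) * (infLap v x) ^ 2
      ≤ -jdet (fun i y => (gradSq v y + δ) ^ (β/2) * pd i v y) x := by
  intro x hx
  have hv2 : ContDiffAt ℝ 2 v x := (hv.contDiffAt (hU.mem_nhds hx)).of_le (by norm_cast)
  have hpd := hv2.differentiableAt_pd
  rw [one_div_mul_sq_pd_rpow_gradSq_add hpd hδ, jdet_rpow_gradSq_add_mul_pd hpd hδ]
  calc _ = (gradSq v x + δ) ^ (β - 1) *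
        ((β + 1) * hessGradSq v x + (β + 1) / ε * infLap v x ^ 2) := by ring
    _ ≤ (gradSq v x + δ) ^ (β - 1) * (-detHess v x * ((β + 1) * gradSq v x + δ)) :=
        mul_le_mul_of_nonneg_left
          (hessGradSq_add_infLap_sq_le (hv2.pd2_comm 0 1) hε hδ.le (heq x hx) β)
          (rpow_nonneg (add_nonneg (gradSq_nonneg v x) hδ.le) _)
    _ = _ := by ring

/-- pointwise lower bound for −det DG_δ along solutions of the
regularized ∞-Laplace equation Δ∞v + εΔv = 0. -/
theorem stmt_14 (U : Set E2) (hU : IsOpen U) (ε : ℝ) (hε : 0 < ε)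
    (v : E2 → ℝ) (hv : ContDiffOn ℝ (⊤ : ℕ∞) v U)
    (heq : ∀ x ∈ U, infLap v x + ε * lap v x = 0)
    (β : ℝ) (hβ : -1 < β) (δ : ℝ) (hδ : 0 < δ) :
    ∀ x ∈ U,
      (1/(β+1)) * ((pd 0 (fun y => (gradSq v y + δ) ^ ((β+1)/2)) x) ^ 2
            + (pd 1 (fun y => (gradSq v y + δ) ^ ((β+1)/2)) x) ^ 2)
        + ((β+1)/ε) * (gradSq v x + δ) ^ (β-1) * (infLap v x) ^ 2
      ≤ -jdet (fun i y => (gradSq v y + δ) ^ (β/2) * pd i v y) x :=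
  stmt_14_general U hU ε hε v hv heq β δ hδ
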